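/- arXiv:2512.16167 — 2 statements merged into one kernel-verified Lean document; each statement's English description precedes it below -/
import Mathlib

section
/- Let f, g : ℝ × ℝ → ℝ be continuously differentiable payoff-difference functions with f(1,1) > 0 and g(1,1) > 0. Then the point (1,1) is a locally asymptotically stable equilibrium of the coupled replicator system: (1,1) is a fixed point of the vector field, and there exists δ > 0 such that every solution (x(t), y(t)) defined on [0,∞) with values in [0,1] × [0,1] and initial condition satisfying |x(0) − 1| < δ and |y(0) − 1| < δ remains within any prescribed neighborhood of (1,1) and converges to (1,1) as t → ∞. -/
/-! Near `(1,1)` both payoff differences exceed some `c > 0`, so on a small box `[1-δ,1]²`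
both replicator speeds are nonnegative. Hence a solution starting in the box can never leave it:
at the first exit time both coordinates would have been nondecreasing all along. Inside the box
`ẋ ≥ (1-δ) c (1-x)`, so `1 - x` decays exponentially, and likewise for `y`. -/

open Filter Topology Set Real

theorem monotoneOn_of_hasDerivAt_nonneg {u u' : ℝ → ℝ} {D : Set ℝ} (hD : Convex ℝ D)
    (hu : ∀ t ∈ D, HasDerivAt u (u' t) t) (hu' : ∀ t ∈ interior D, 0 ≤ u' t) :
    MonotoneOn u D :=
  monotoneOn_of_hasDerivWithinAt_nonneg hD
    (fun t ht => (hu t ht).continuousAt.continuousWithinAt)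
    (fun t ht => (hu t (interior_subset ht)).hasDerivWithinAt) hu'

theorem forall_lt_of_hasDerivAt_nonneg {x y x' y' : ℝ → ℝ} {a b : ℝ}
    (hx : ∀ t ≥ 0, HasDerivAt x (x' t) t) (hy : ∀ t ≥ 0, HasDerivAt y (y' t) t)
    (hx' : ∀ t ≥ 0, a < x t → b < y t → 0 ≤ x' t) (hy' : ∀ t ≥ 0, a < x t → b < y t → 0 ≤ y' t)
    (hx0 : a < x 0) (hy0 : b < y 0) : ∀ t ≥ 0, a < x t ∧ b < y t := by
  by_contra! hexit
  set B : Set ℝ := Ici 0 ∩ (fun t => (x t, y t)) ⁻¹' {p | p.1 ≤ a ∨ p.2 ≤ b}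
  have hB : IsClosed B :=
    ContinuousOn.preimage_isClosed_of_isClosed
      (fun t ht => ((hx t ht).continuousAt.prodMk (hy t ht).continuousAt).continuousWithinAt)
      isClosed_Ici
      ((isClosed_le continuous_fst continuous_const).union
        (isClosed_le continuous_snd continuous_const))
  have hBne : B.Nonempty := by
    obtain ⟨t, ht, hxy⟩ := hexit
    exact ⟨t, ht, (le_or_gt (x t) a).imp_right hxy⟩
  have hBbdd : BddBelow B := ⟨0, fun _ ht => ht.1⟩
  set τ := sInf B
  have hτ : τ ∈ B := hB.csInf_mem hBne hBbdd
  have hbefore : ∀ t ∈ Ico 0 τ, a < x t ∧ b < y t := fun t ht => by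
    by_contra! h
    exact (csInf_le hBbdd ⟨ht.1, (le_or_gt (x t) a).imp_right h⟩).not_gt ht.2
  have hmono : ∀ {z z' : ℝ → ℝ}, (∀ t ≥ 0, HasDerivAt z (z' t) t) →
      (∀ t ≥ 0, a < x t → b < y t → 0 ≤ z' t) → z 0 ≤ z τ := fun hz hz' =>
    monotoneOn_of_hasDerivAt_nonneg (convex_Icc 0 τ) (fun t ht => hz t ht.1) (fun t ht => by
      rw [interior_Icc] at ht
      have hxy := hbefore t (Ioo_subset_Ico_self ht)
      exact hz' t ht.1.le hxy.1 hxy.2) ⟨le_rfl, hτ.1⟩ ⟨hτ.1, le_rfl⟩ hτ.1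
  rcases hτ.2 with h | h
  · exact h.not_gt (hx0.trans_le (hmono hx hx'))
  · exact h.not_gt (hy0.trans_le (hmono hy hy'))

theorem one_sub_le_mul_exp_of_le_deriv {u u' : ℝ → ℝ} {c : ℝ}
    (hu : ∀ t ≥ 0, HasDerivAt u (u' t) t) (hu' : ∀ t ≥ 0, c * (1 - u t) ≤ u' t) :
    ∀ t ≥ 0, 1 - u t ≤ (1 - u 0) * exp (-(c * t)) := by
  have hw : MonotoneOn (fun t => (u t - 1) * exp (c * t)) (Ici 0) := by
    refine monotoneOn_of_hasDerivAt_nonneg (convex_Ici 0)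
      (u' := fun t => u' t * exp (c * t) + (u t - 1) * (exp (c * t) * (c * 1)))
      (fun t ht => ((hu t ht).sub_const 1).mul ((hasDerivAt_id t).const_mul c).exp)
      fun t ht => ?_
    have hct := hu' t (interior_subset ht)
    have he := exp_pos (c * t)
    nlinarith
  intro t ht
  have h := hw (mem_Ici.2 le_rfl) ht ht
  simp only [mul_zero, exp_zero, mul_one] at h
  have he := exp_pos (c * t)
  rw [exp_neg, ← div_eq_mul_inv, le_div_iff₀ he]
  linarith

theorem tendsto_one_of_le_one_of_le_deriv {u u' : ℝ → ℝ} {c : ℝ} (hc : 0 < c)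
    (hu : ∀ t ≥ 0, HasDerivAt u (u' t) t) (hu' : ∀ t ≥ 0, c * (1 - u t) ≤ u' t)
    (hu1 : ∀ t ≥ 0, u t ≤ 1) : Tendsto u atTop (𝓝 1) := by
  have hlow : Tendsto (fun t => 1 - (1 - u 0) * exp (-(c * t))) atTop (𝓝 1) := by
    have := (tendsto_exp_neg_atTop_nhds_zero.comp (tendsto_id.const_mul_atTop hc)).const_mul
      (1 - u 0)
    simpa using this.const_sub 1
  refine tendsto_of_tendsto_of_tendsto_of_le_of_le' hlow tendsto_const_nhds ?_ ?_
  · filter_upwards [eventually_ge_atTop 0] with t ht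
    linarith [one_sub_le_mul_exp_of_le_deriv hu hu' t ht]
  · filter_upwards [eventually_ge_atTop 0] with t ht using hu1 t ht

theorem exists_Icc_prod_Icc_subset_of_mem_nhds {V : Set (ℝ × ℝ)} {p q b : ℝ} (hb : 0 < b)
    (hV : V ∈ 𝓝 (p, q)) : ∃ δ > 0, δ < b ∧ Icc (p - δ) p ×ˢ Icc (q - δ) q ⊆ V := by
  obtain ⟨ε, hε, hball⟩ := Metric.nhds_basis_closedBall.mem_iff.1 hV
  refine ⟨min ε (b / 2), by positivity, by linarith [min_le_right ε (b / 2)], ?_⟩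
  rw [← closedBall_prod_same] at hball
  refine Subset.trans (prod_mono ?_ ?_) hball <;> rw [Real.closedBall_eq_Icc] <;>
    exact Icc_subset_Icc (by linarith [min_le_left ε (b / 2)]) (by linarith)

theorem ContinuousAt.exists_pos_eventually_le {X : Type*} [TopologicalSpace X] {h : X → ℝ}
    {x₀ : X} (hh : ContinuousAt h x₀) (h0 : 0 < h x₀) : ∃ c > 0, ∀ᶠ x in 𝓝 x₀, c ≤ h x :=
  ⟨h x₀ / 2, half_pos h0, hh.eventually (eventually_ge_nhds (half_lt_self h0))⟩

theorem mul_mul_one_sub_le_mul_one_sub_mul {a c x φ : ℝ} (ha : 0 ≤ a) (hc : 0 ≤ c)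
    (hax : a ≤ x) (hx1 : x ≤ 1) (hφ : c ≤ φ) : a * c * (1 - x) ≤ x * (1 - x) * φ := by
  have h1 : 0 ≤ 1 - x := sub_nonneg.2 hx1
  have h2 : a * (1 - x) ≤ x * (1 - x) := mul_le_mul_of_nonneg_right hax h1
  calc a * c * (1 - x) = a * (1 - x) * c := by ring
    _ ≤ x * (1 - x) * φ := mul_le_mul h2 hφ hc ((mul_nonneg ha h1).trans h2)

/-- If the payoff-difference functions `f, g` are continuously
differentiable with `f (1,1) > 0` and `g (1,1) > 0`, then `(1,1)` is a locally
asymptotically stable equilibrium of the coupled replicator system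
`ẋ = x(1-x) f(x,y)`, `ẏ = y(1-y) g(x,y)`: it is a fixed point of the vector
field, and for every prescribed neighborhood `U` of `(1,1)` there is `δ > 0`
such that every `[0,1]²`-valued solution on `[0,∞)` starting `δ`-close to
`(1,1)` stays in `U` and converges to `(1,1)` as `t → ∞`. -/
theorem replicator_one_one_locally_asymptotically_stable
    (f g : ℝ × ℝ → ℝ) (hf : ContDiff ℝ 1 f) (hg : ContDiff ℝ 1 g)
    (hf11 : 0 < f (1, 1)) (hg11 : 0 < g (1, 1)) :
    ((1 : ℝ) * (1 - 1) * f (1, 1), (1 : ℝ) * (1 - 1) * g (1, 1)) = (0, 0) ∧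
      ∀ U ∈ 𝓝 (((1 : ℝ), (1 : ℝ))), ∃ δ > (0 : ℝ),
        ∀ x y : ℝ → ℝ,
          (∀ t ≥ (0 : ℝ), HasDerivAt x (x t * (1 - x t) * f (x t, y t)) t) →
          (∀ t ≥ (0 : ℝ), HasDerivAt y (y t * (1 - y t) * g (x t, y t)) t) →
          (∀ t ≥ (0 : ℝ), x t ∈ Set.Icc (0 : ℝ) 1 ∧ y t ∈ Set.Icc (0 : ℝ) 1) →
          |x 0 - 1| < δ → |y 0 - 1| < δ →
          (∀ t ≥ (0 : ℝ), (x t, y t) ∈ U) ∧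
            Tendsto (fun t => (x t, y t)) atTop (𝓝 ((1 : ℝ), (1 : ℝ))) := by
  refine ⟨by norm_num, fun U hU => ?_⟩
  obtain ⟨c, hc, hfg⟩ := (hf.continuous.min hg.continuous).continuousAt.exists_pos_eventually_le
    (lt_min hf11 hg11)
  obtain ⟨δ, hδ, hδ1, hbox⟩ :=
    exists_Icc_prod_Icc_subset_of_mem_nhds one_pos (inter_mem hU (hfg.mono fun _ => le_min_iff.1))
  refine ⟨δ, hδ, fun x y hx hy hxy hx0 hy0 => ?_⟩
  have hmem : ∀ t ≥ 0, 1 - δ < x t → 1 - δ < y t →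
      (x t, y t) ∈ U ∧ c ≤ f (x t, y t) ∧ c ≤ g (x t, y t) := fun t ht hxt hyt =>
    hbox ⟨⟨hxt.le, (hxy t ht).1.2⟩, hyt.le, (hxy t ht).2.2⟩
  have hinv : ∀ t ≥ 0, 1 - δ < x t ∧ 1 - δ < y t := by
    refine forall_lt_of_hasDerivAt_nonneg hx hy (fun t ht hxt hyt => ?_)
      (fun t ht hxt hyt => ?_) (by linarith [(abs_sub_lt_iff.1 hx0).2])
      (by linarith [(abs_sub_lt_iff.1 hy0).2])
    · exact mul_nonneg (mul_nonneg (hxy t ht).1.1 (sub_nonneg.2 (hxy t ht).1.2))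
        (hc.le.trans (hmem t ht hxt hyt).2.1)
    · exact mul_nonneg (mul_nonneg (hxy t ht).2.1 (sub_nonneg.2 (hxy t ht).2.2))
        (hc.le.trans (hmem t ht hxt hyt).2.2)
  have hmem' t (ht : 0 ≤ t) := hmem t ht (hinv t ht).1 (hinv t ht).2
  have hrate : 0 < (1 - δ) * c := mul_pos (sub_pos.2 hδ1) hc
  refine ⟨fun t ht => (hmem' t ht).1, Tendsto.prodMk_nhds ?_ ?_⟩
  · exact tendsto_one_of_le_one_of_le_deriv hrate hx (fun t ht =>
      mul_mul_one_sub_le_mul_one_sub_mul (sub_pos.2 hδ1).le hc.le (hinv t ht).1.le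
        (hxy t ht).1.2 (hmem' t ht).2.1) fun t ht => (hxy t ht).1.2
  · exact tendsto_one_of_le_one_of_le_deriv hrate hy (fun t ht =>
      mul_mul_one_sub_le_mul_one_sub_mul (sub_pos.2 hδ1).le hc.le (hinv t ht).2.le
        (hxy t ht).2.2 (hmem' t ht).2.2) fun t ht => (hxy t ht).2.2
end

section
/- Let f, g : ℝ × ℝ → ℝ be continuous with f(1,1) > 0 and g(1,1) > 0. Then there exists ε ∈ (0,1) such that every solution (x(t), y(t)) of the coupled replicator system defined on [0,∞) with values in [0,1] × [0,1] and initial condition (x(0), y(0)) ∈ (1 − ε, 1) × (1 − ε, 1) has x and y nondecreasing on [0,∞) and satisfies (x(t), y(t)) → (1,1) as t → ∞; that is, the resident strategy pair (SH, HQ) resists rare invasions by mutants on either side. -/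
/-!
Since `f` and `g` are positive at `(1, 1)`, they are positive on a small square
`[1 - ε, 1]²`. Inside that square both components of the replicator field are nonnegative,
so a solution starting in `(1 - ε, 1)²` can never leave it (at a first exit time both
coordinates would already have increased) and `x`, `y` are nondecreasing. Being bounded by `1`,
they converge to limits `L, M ∈ [1 - ε, 1]`. The derivative `x (1 - x) f (x, y)` then converges
to `L (1 - L) f (L, M)`, and the limit of the derivative of a convergent function is `0`;
as `L > 0` and `f (L, M) > 0`, this forces `L = 1`, and likewise `M = 1`.
-/

open Filter Topology Set

theorem exists_Icc_prod_Icc_subset_of_mem_nhds_s17 {U : Set (ℝ × ℝ)} {a r : ℝ}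
    (hU : U ∈ 𝓝 (a, a)) (hr : 0 < r) :
    ∃ ε ∈ Ioo 0 r, Icc (a - ε) a ×ˢ Icc (a - ε) a ⊆ U := by
  rw [nhds_prod_eq] at hU
  obtain ⟨V, hV, hVU⟩ := mem_prod_self_iff.1 hU
  obtain ⟨l, u, ⟨hla, hau⟩, hV'⟩ := mem_nhds_iff_exists_Ioo_subset.1 hV
  have hIcc : Icc (a - min ((a - l) / 2) (r / 2)) a ⊆ V :=
    (Icc_subset_Ioo (by linarith [min_le_left ((a - l) / 2) (r / 2)]) hau).trans hV'
  exact ⟨_, ⟨lt_min (by linarith) (by linarith), (min_le_right _ _).trans_lt (by linarith)⟩,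
    (prod_mono hIcc hIcc).trans hVU⟩

theorem MonotoneOn.exists_tendsto_atTop_mem_Icc {u : ℝ → ℝ} {a b : ℝ}
    (hu : MonotoneOn u (Ici a)) (hb : ∀ t ≥ a, u t ≤ b) :
    ∃ L ∈ Icc (u a) b, Tendsto u atTop (𝓝 L) := by
  have hmono : Monotone fun t => u (max t a) := fun s t hst =>
    hu (le_max_right s a) (le_max_right t a) (max_le_max_right a hst)
  have hlim := tendsto_atTop_ciSup hmono
    ⟨b, by rintro _ ⟨t, rfl⟩; exact hb _ (le_max_right t a)⟩
  have hu' : Tendsto u atTop (𝓝 (⨆ t, u (max t a))) :=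
    hlim.congr' <| (eventually_ge_atTop a).mono fun t ht => by simp only [max_eq_left ht]
  have hge : ∀ᶠ t in atTop, u a ≤ u t :=
    (eventually_ge_atTop a).mono fun t ht => hu self_mem_Ici ht ht
  have hle : ∀ᶠ t in atTop, u t ≤ b := (eventually_ge_atTop a).mono hb
  exact ⟨_, ⟨ge_of_tendsto hu' hge, le_of_tendsto hu' hle⟩, hu'⟩

theorem nonpos_of_tendsto_of_tendsto_hasDerivAt {u u' : ℝ → ℝ} {L d : ℝ}
    (hderiv : ∀ᶠ t in atTop, HasDerivAt u (u' t) t) (hu : Tendsto u atTop (𝓝 L))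
    (hu' : Tendsto u' atTop (𝓝 d)) : d ≤ 0 := by
  by_contra! hd
  obtain ⟨t₀, ht₀⟩ := eventually_atTop.1 <|
    hderiv.and (hu'.eventually (lt_mem_nhds (half_lt_self hd)))
  -- past `t₀` the slope of `u` stays above `d / 2`, so `u` outgrows a line of slope `d / 2`
  have hmono : MonotoneOn (fun t => u t - d / 2 * t) (Ici t₀) := by
    have hderiv' : ∀ t ∈ Ici t₀, HasDerivAt (fun t => u t - d / 2 * t) (u' t - d / 2) t :=
      fun t ht => ((ht₀ t ht).1.sub ((hasDerivAt_id' t).const_mul (d / 2))).congr_deriv (by ring)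
    refine monotoneOn_of_hasDerivWithinAt_nonneg (convex_Ici t₀)
      (fun t ht => (hderiv' t ht).continuousAt.continuousWithinAt)
      (fun t ht => (hderiv' t (interior_subset ht)).hasDerivWithinAt) fun t ht => ?_
    exact sub_nonneg.2 (ht₀ t (interior_subset ht)).2.le
  have hline : Tendsto (fun t => u t₀ - d / 2 * t₀ + d / 2 * t) atTop atTop :=
    tendsto_atTop_add_const_left _ _ (tendsto_id.const_mul_atTop (half_pos hd))
  refine not_tendsto_atTop_of_tendsto_nhds hu (tendsto_atTop_mono' _ ?_ hline)
  filter_upwards [eventually_ge_atTop t₀] with t ht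
  linarith [hmono self_mem_Ici ht ht]

theorem eq_zero_of_tendsto_of_tendsto_hasDerivAt {u u' : ℝ → ℝ} {L d : ℝ}
    (hderiv : ∀ᶠ t in atTop, HasDerivAt u (u' t) t) (hu : Tendsto u atTop (𝓝 L))
    (hu' : Tendsto u' atTop (𝓝 d)) : d = 0 :=
  le_antisymm (nonpos_of_tendsto_of_tendsto_hasDerivAt hderiv hu hu') <| neg_nonpos.1 <|
    nonpos_of_tendsto_of_tendsto_hasDerivAt (hderiv.mono fun _ ht => ht.neg) hu.neg hu'.neg

theorem ContinuousOn.forall_lt_of_forall_Ico_lt {p : ℝ → ℝ} {a c : ℝ}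
    (hp : ContinuousOn p (Ici a)) (ha : c < p a)
    (hstep : ∀ T > a, (∀ s ∈ Ico a T, c < p s) → c < p T) : ∀ t ≥ a, c < p t := by
  by_contra! h
  set B := Ici a ∩ p ⁻¹' Iic c
  have hBne : B.Nonempty := h
  have hBbdd : BddBelow B := ⟨a, fun _ hs => hs.1⟩
  -- the first exit time `sInf B` belongs to `B` because `B` is closed
  have hTB : sInf B ∈ B :=
    (hp.preimage_isClosed_of_isClosed isClosed_Ici isClosed_Iic).csInf_mem hBne hBbdd
  have hT : a < sInf B := hTB.1.lt_of_ne fun h => (h ▸ hTB.2 : p a ≤ c).not_gt ha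
  refine (hstep _ hT fun s hs => ?_).not_ge hTB.2
  by_contra! hsc
  exact (csInf_le hBbdd ⟨hs.1, hsc⟩).not_gt hs.2

theorem monotoneOn_of_hasDerivAt_replicator {u F : ℝ → ℝ} {s : Set ℝ} (hs : Convex ℝ s)
    (hu : ∀ t ∈ s, HasDerivAt u (u t * (1 - u t) * F t) t)
    (hrange : ∀ t ∈ s, u t ∈ Icc 0 1) (hF : ∀ t ∈ interior s, 0 ≤ F t) :
    MonotoneOn u s := by
  refine monotoneOn_of_hasDerivWithinAt_nonneg hs
    (fun t ht => (hu t ht).continuousAt.continuousWithinAt)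
    (fun t ht => (hu t (interior_subset ht)).hasDerivWithinAt) fun t ht => ?_
  obtain ⟨h0, h1⟩ := hrange t (interior_subset ht)
  exact mul_nonneg (mul_nonneg h0 (sub_nonneg.2 h1)) (hF t ht)

theorem replicator_limit_eq_one {u F : ℝ → ℝ} {L δ : ℝ}
    (hu : ∀ᶠ t in atTop, HasDerivAt u (u t * (1 - u t) * F t) t)
    (hL : Tendsto u atTop (𝓝 L)) (hF : Tendsto F atTop (𝓝 δ)) (hL0 : L ≠ 0)
    (hδ : δ ≠ 0) : L = 1 := by
  have h := eq_zero_of_tendsto_of_tendsto_hasDerivAt hu hL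
    ((hL.mul (tendsto_const_nhds.sub hL)).mul hF)
  simp only [mul_eq_zero, hL0, hδ, sub_eq_zero, false_or, or_false] at h
  exact h.symm

section Replicator

variable {f g : ℝ × ℝ → ℝ} {x y : ℝ → ℝ} {c : ℝ}
  (hx : ∀ t ≥ (0 : ℝ), HasDerivAt x (x t * (1 - x t) * f (x t, y t)) t)
  (hy : ∀ t ≥ (0 : ℝ), HasDerivAt y (y t * (1 - y t) * g (x t, y t)) t)
  (hrange : ∀ t ≥ (0 : ℝ), x t ∈ Icc (0 : ℝ) 1 ∧ y t ∈ Icc (0 : ℝ) 1)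
  (hfg : ∀ p ∈ Ioc c 1 ×ˢ Ioc c 1, 0 ≤ f p ∧ 0 ≤ g p)
include hx hy hrange hfg

theorem replicator_trapped (hx0 : c < x 0) (hy0 : c < y 0) :
    ∀ t ≥ (0 : ℝ), c < x t ∧ c < y t := by
  have hcont : ContinuousOn (fun t => min (x t) (y t)) (Ici 0) :=
    ContinuousOn.inf (fun t ht => (hx t ht).continuousAt.continuousWithinAt)
      (fun t ht => (hy t ht).continuousAt.continuousWithinAt)
  refine fun t ht => lt_min_iff.1 (hcont.forall_lt_of_forall_Ico_lt (lt_min hx0 hy0) ?_ t ht)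
  intro T hT hbefore
  have hF : ∀ s ∈ interior (Icc 0 T), 0 ≤ f (x s, y s) ∧ 0 ≤ g (x s, y s) := by
    rw [interior_Icc]
    intro s hs
    obtain ⟨hxs, hys⟩ := lt_min_iff.1 (hbefore s ⟨hs.1.le, hs.2⟩)
    obtain ⟨hxs', hys'⟩ := hrange s hs.1.le
    exact hfg _ ⟨⟨hxs, hxs'.2⟩, ⟨hys, hys'.2⟩⟩
  have hxm := monotoneOn_of_hasDerivAt_replicator (convex_Icc 0 T) (fun s hs => hx s hs.1)
    (fun s hs => (hrange s hs.1).1) fun s hs => (hF s hs).1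
  have hym := monotoneOn_of_hasDerivAt_replicator (convex_Icc 0 T) (fun s hs => hy s hs.1)
    (fun s hs => (hrange s hs.1).2) fun s hs => (hF s hs).2
  have h0T : (0 : ℝ) ∈ Icc 0 T := left_mem_Icc.2 hT.le
  have hTT : T ∈ Icc 0 T := right_mem_Icc.2 hT.le
  exact lt_min (hx0.trans_le (hxm h0T hTT hT.le)) (hy0.trans_le (hym h0T hTT hT.le))

theorem replicator_monotoneOn (hx0 : c < x 0) (hy0 : c < y 0) :
    MonotoneOn x (Ici 0) ∧ MonotoneOn y (Ici 0) := by
  have hF : ∀ t ∈ interior (Ici (0 : ℝ)), 0 ≤ f (x t, y t) ∧ 0 ≤ g (x t, y t) := by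
    intro t ht
    obtain ⟨hxt, hyt⟩ := replicator_trapped hx hy hrange hfg hx0 hy0 t (interior_subset ht)
    obtain ⟨hxt', hyt'⟩ := hrange t (interior_subset ht)
    exact hfg _ ⟨⟨hxt, hxt'.2⟩, ⟨hyt, hyt'.2⟩⟩
  exact ⟨monotoneOn_of_hasDerivAt_replicator (convex_Ici 0) hx (fun t ht => (hrange t ht).1)
      fun t ht => (hF t ht).1,
    monotoneOn_of_hasDerivAt_replicator (convex_Ici 0) hy (fun t ht => (hrange t ht).2)
      fun t ht => (hF t ht).2⟩

end Replicator

/-- If `f, g` are continuous with `f (1,1) > 0` and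
`g (1,1) > 0`, then there exists `ε ∈ (0,1)` such that every `[0,1]²`-valued
solution of the coupled replicator system on `[0,∞)` with initial condition in
`(1-ε, 1) × (1-ε, 1)` has `x` and `y` nondecreasing on `[0,∞)` and converges
to `(1,1)` as `t → ∞`: the resident strategy pair (SH, HQ) resists rare
invasions by mutants on either side. -/
theorem replicator_resists_rare_invasions
    (f g : ℝ × ℝ → ℝ) (hf : Continuous f) (hg : Continuous g)
    (hf11 : 0 < f (1, 1)) (hg11 : 0 < g (1, 1)) :
    ∃ ε ∈ Set.Ioo (0 : ℝ) 1,
      ∀ x y : ℝ → ℝ,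
        (∀ t ≥ (0 : ℝ), HasDerivAt x (x t * (1 - x t) * f (x t, y t)) t) →
        (∀ t ≥ (0 : ℝ), HasDerivAt y (y t * (1 - y t) * g (x t, y t)) t) →
        (∀ t ≥ (0 : ℝ), x t ∈ Set.Icc (0 : ℝ) 1 ∧ y t ∈ Set.Icc (0 : ℝ) 1) →
        x 0 ∈ Set.Ioo (1 - ε) 1 → y 0 ∈ Set.Ioo (1 - ε) 1 →
        MonotoneOn x (Set.Ici 0) ∧ MonotoneOn y (Set.Ici 0) ∧
          Tendsto (fun t => (x t, y t)) atTop (𝓝 ((1 : ℝ), (1 : ℝ))) := by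
  obtain ⟨ε, hε, hsq⟩ := exists_Icc_prod_Icc_subset_of_mem_nhds_s17
    (((hf.tendsto _).eventually (lt_mem_nhds hf11)).and
      ((hg.tendsto _).eventually (lt_mem_nhds hg11))) one_pos
  refine ⟨ε, hε, fun x y hx hy hrange hx0 hy0 => ?_⟩
  obtain ⟨hxm, hym⟩ := replicator_monotoneOn hx hy hrange
    (fun p hp => (hsq (prod_mono Ioc_subset_Icc_self Ioc_subset_Icc_self hp)).imp
      le_of_lt le_of_lt) hx0.1 hy0.1
  obtain ⟨L, hL, hxL⟩ := hxm.exists_tendsto_atTop_mem_Icc fun t ht => (hrange t ht).1.2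
  obtain ⟨M, hM, hyM⟩ := hym.exists_tendsto_atTop_mem_Icc fun t ht => (hrange t ht).2.2
  have hLM : (L, M) ∈ Icc (1 - ε) 1 ×ˢ Icc (1 - ε) 1 :=
    ⟨⟨hx0.1.le.trans hL.1, hL.2⟩, ⟨hy0.1.le.trans hM.1, hM.2⟩⟩
  have hε1 : 0 < 1 - ε := sub_pos.2 hε.2
  have hlim := hxL.prodMk_nhds hyM
  obtain rfl : L = 1 := replicator_limit_eq_one ((eventually_ge_atTop 0).mono hx) hxL
    ((hf.tendsto _).comp hlim) (hε1.trans_le hLM.1.1).ne' (hsq hLM).1.ne'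
  obtain rfl : M = 1 := replicator_limit_eq_one ((eventually_ge_atTop 0).mono hy) hyM
    ((hg.tendsto _).comp hlim) (hε1.trans_le hLM.2.1).ne' (hsq hLM).2.ne'
  exact ⟨hxm, hym, hlim⟩
end
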